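/- arXiv:2405.11250 — 2 statements merged into one kernel-verified Lean document; each statement's English description precedes it below -/
import Mathlib

section
/- For any preferred (equivalently stable) extension S of D_dag, the map sending S to the digraph G(S) = (V, {(x,y) : arr_{xy} ∈ S}) is a bijection between stable extensions of D_dag and directed acyclic graphs on V. -/
/-- Assumptions of the causal ABA framework `D_dag`: an arrow assumption
`arr x y` for each ordered pair of distinct variables and a no-edge assumption
`noe` for each unordered pair. -/
inductive DagAsm (V : Type) : Type
  | arr : V → V → DagAsm V
  | noe : Sym2 V → DagAsm V

namespace DagAsm

/-- The assumption set of `D_dag`. -/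
def Asms (V : Type) : Set (DagAsm V) :=
  {a | ∃ x y : V, x ≠ y ∧ (a = arr x y ∨ a = noe s(x, y))}

/-- The attack relation induced by the rules of `D_dag`: mutual exclusion among
`{arr x y, arr y x, noe {x,y}}` for each pair `x ≠ y`, and, for each directed
cycle, the arrows along the cycle attack each arrow in it. -/
inductive Att (V : Type) : Set (DagAsm V) → DagAsm V → Prop
  | arrArr (x y : V) : x ≠ y → Att V {arr y x} (arr x y)
  | noeArr (x y : V) : x ≠ y → Att V {noe s(x, y)} (arr x y)
  | arrNoe (x y : V) : x ≠ y → Att V {arr x y} (noe s(x, y))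
  | cycle (l : List V) (x y : V) : 2 ≤ l.length → l.head? = l.getLast? →
      (x, y) ∈ l.zip l.tail →
      Att V {a | ∃ p ∈ l.zip l.tail, a = arr p.1 p.2} (arr x y)

/-- `S` attacks `T` if some subset of `S` attacks a member of `T`. -/
def Attacks {V : Type} (S T : Set (DagAsm V)) : Prop :=
  ∃ U ⊆ S, ∃ a ∈ T, Att V U a

def ConflictFree {V : Type} (S : Set (DagAsm V)) : Prop :=
  S ⊆ Asms V ∧ ¬ Attacks S S

def Defends {V : Type} (S T : Set (DagAsm V)) : Prop :=
  ∀ U ⊆ Asms V, Attacks U T → Attacks S U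

def Admissible {V : Type} (S : Set (DagAsm V)) : Prop :=
  ConflictFree S ∧ Defends S S

def Complete {V : Type} (S : Set (DagAsm V)) : Prop :=
  Admissible S ∧ ∀ T ⊆ Asms V, Defends S T → T ⊆ S

/-- Preferred: ⊆-maximal admissible. -/
def Preferred {V : Type} (S : Set (DagAsm V)) : Prop :=
  Admissible S ∧ ∀ T : Set (DagAsm V), Admissible T → S ⊆ T → T = S

/-- Stable: conflict-free and attacks every assumption outside itself. -/
def Stable {V : Type} (S : Set (DagAsm V)) : Prop :=
  ConflictFree S ∧ ∀ a ∈ Asms V, a ∉ S → Attacks S {a}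

/-- The digraph `G(S)` induced by the arrow assumptions in `S`. -/
def graphOf {V : Type} (S : Set (DagAsm V)) : V → V → Prop :=
  fun x y => arr x y ∈ S

end DagAsm

/-! A stable extension is determined by its arrows: stability puts `noe {x, y}` in exactly when
neither `arr x y` nor `arr y x` is. Its arrows form no directed cycle, for the cycle rule would
let the extension attack itself. Conversely, the arrows of a DAG together with `noe` for its
non-adjacent pairs are stable: a self-attack would exhibit a directed cycle (of length two, for
mutual exclusion of opposite arrows), and they attack every other assumption. -/

section ClosedWalk

variable {α : Type*} {R : α → α → Prop}

def IsClosedWalk (R : α → α → Prop) (l : List α) : Prop :=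
  2 ≤ l.length ∧ l.head? = l.getLast? ∧ ∀ p ∈ l.zip l.tail, R p.1 p.2

theorem List.isChain_iff_forall_mem_zip_tail {l : List α} :
    l.IsChain R ↔ ∀ p ∈ l.zip l.tail, R p.1 p.2 := by
  induction l using List.twoStepInduction <;> simp_all

theorem exists_isClosedWalk_iff : (∃ l, IsClosedWalk R l) ↔ ∃ x, Relation.TransGen R x x := by
  simp only [IsClosedWalk, ← List.isChain_iff_forall_mem_zip_tail]
  constructor
  · rintro ⟨l, hlen, hcyc, hchain⟩
    match l, hlen with
    | a :: b :: l, _ =>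
      rw [List.isChain_cons_cons] at hchain
      refine ⟨a, Relation.TransGen.head' hchain.1 ?_⟩
      apply List.relationReflTransGen_of_exists_isChain_cons l hchain.2
      simpa [List.getLast?_eq_some_getLast] using hcyc.symm
  · rintro ⟨x, hx⟩
    obtain ⟨b, hxb, hbx⟩ := Relation.TransGen.head'_iff.mp hx
    obtain ⟨l, hchain, hlast⟩ := List.exists_isChain_cons_of_relationReflTransGen hbx
    refine ⟨x :: b :: l, by simp, ?_, List.isChain_cons_cons.mpr ⟨hxb, hchain⟩⟩
    simp [List.getLast?_eq_some_getLast, hlast]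

theorem IsClosedWalk.exists_mem_zip_tail {l : List α} (h : IsClosedWalk R l) :
    ∃ p, p ∈ l.zip l.tail := by
  match l, h.1 with
  | a :: b :: _, _ => exact ⟨(a, b), by simp⟩

end ClosedWalk

namespace DagAsm

variable {V : Type} {S T : Set (DagAsm V)} {x y : V}

theorem arr_mem_asms : arr x y ∈ Asms V ↔ x ≠ y := by
  simp [Asms]

theorem noe_mem_asms : noe s(x, y) ∈ Asms V ↔ x ≠ y := by
  simp only [Asms, Set.mem_ofPred_eq, reduceCtorEq, noe.injEq, Sym2.eq_iff, false_or]
  refine ⟨?_, fun hxy => ⟨x, y, hxy, .inl ⟨rfl, rfl⟩⟩⟩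
  rintro ⟨u, v, huv, ⟨rfl, rfl⟩ | ⟨rfl, rfl⟩⟩
  exacts [huv, huv.symm]

theorem attacks_iff_exists_attacks_singleton :
    Attacks S T ↔ ∃ a ∈ T, Attacks S {a} :=
  ⟨fun ⟨U, hU, a, ha, h⟩ => ⟨a, ha, U, hU, a, rfl, h⟩,
    fun ⟨a, ha, U, hU, _, hb, h⟩ => ⟨U, hU, a, ha, Set.mem_singleton_iff.mp hb ▸ h⟩⟩

theorem attacks_noe_iff :
    Attacks S {noe s(x, y)} ↔ x ≠ y ∧ (arr x y ∈ S ∨ arr y x ∈ S) := by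
  constructor
  · rintro ⟨U, hUS, a, rfl, hatt⟩
    generalize hz : s(x, y) = z at hatt
    cases hatt with
    | arrNoe u v huv =>
      rcases Sym2.eq_iff.mp hz with ⟨rfl, rfl⟩ | ⟨rfl, rfl⟩
      · exact ⟨huv, .inl (hUS rfl)⟩
      · exact ⟨huv.symm, .inr (hUS rfl)⟩
  · rintro ⟨hxy, hx | hy⟩
    · exact ⟨{arr x y}, by simpa, _, rfl, .arrNoe x y hxy⟩
    · refine ⟨{arr y x}, by simpa, _, ?_, .arrNoe y x hxy.symm⟩
      rw [Set.mem_singleton_iff, Sym2.eq_swap]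

theorem attacks_arr_iff :
    Attacks S {arr x y} ↔ x ≠ y ∧ (arr y x ∈ S ∨ noe s(x, y) ∈ S) ∨
      ∃ l, IsClosedWalk (graphOf S) l ∧ (x, y) ∈ l.zip l.tail := by
  constructor
  · rintro ⟨U, hUS, a, rfl, hatt⟩
    cases hatt with
    | arrArr _ _ hxy => exact .inl ⟨hxy, .inl (hUS rfl)⟩
    | noeArr _ _ hxy => exact .inl ⟨hxy, .inr (hUS rfl)⟩
    | cycle l _ _ hlen hcyc hmem =>
      exact .inr ⟨l, ⟨hlen, hcyc, fun p hp => hUS ⟨p, hp, rfl⟩⟩, hmem⟩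
  · rintro (⟨hxy, h | h⟩ | ⟨l, ⟨hlen, hcyc, hwalk⟩, hmem⟩)
    · exact ⟨{arr y x}, by simpa, _, rfl, .arrArr x y hxy⟩
    · exact ⟨{noe s(x, y)}, by simpa, _, rfl, .noeArr x y hxy⟩
    · refine ⟨_, ?_, _, rfl, .cycle l x y hlen hcyc hmem⟩
      rintro _ ⟨p, hp, rfl⟩
      exact hwalk p hp

theorem conflictFree_iff :
    ConflictFree S ↔ S ⊆ Asms V ∧ ∀ a ∈ S, ¬ Attacks S {a} := by
  simp [ConflictFree, attacks_iff_exists_attacks_singleton (T := S)]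

namespace Stable

theorem acyclic_graphOf (hS : Stable S) (x : V) : ¬ Relation.TransGen (graphOf S) x x := by
  intro hx
  obtain ⟨l, hl⟩ := exists_isClosedWalk_iff.mpr ⟨x, hx⟩
  obtain ⟨⟨a, b⟩, hab⟩ := hl.exists_mem_zip_tail
  exact (conflictFree_iff.mp hS.1).2 (arr a b) (hl.2.2 _ hab)
    (attacks_arr_iff.mpr (.inr ⟨l, hl, hab⟩))

theorem noe_mem_iff (hS : Stable S) :
    noe s(x, y) ∈ S ↔ x ≠ y ∧ arr x y ∉ S ∧ arr y x ∉ S := by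
  constructor
  · intro h
    have hxy : x ≠ y := noe_mem_asms.mp (hS.1.1 h)
    have hnatt := (conflictFree_iff.mp hS.1).2 _ h
    rw [attacks_noe_iff] at hnatt
    tauto
  · rintro ⟨hxy, hx, hy⟩
    by_contra h
    have hatt := attacks_noe_iff.mp (hS.2 _ ⟨x, y, hxy, .inr rfl⟩ h)
    tauto

theorem eq_of_graphOf_eq (hS : Stable S) (hT : Stable T) (h : graphOf S = graphOf T) :
    S = T := by
  have harr (u v : V) : arr u v ∈ S ↔ arr u v ∈ T := iff_of_eq (congrFun₂ h u v)
  ext a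
  cases a with
  | arr x y => exact harr x y
  | noe z =>
    induction z using Sym2.ind with
    | h x y => rw [hS.noe_mem_iff, hT.noe_mem_iff, harr x y, harr y x]

end Stable

def ofGraph (E : V → V → Prop) : Set (DagAsm V) :=
  {a | ∃ x y, x ≠ y ∧ E x y ∧ a = arr x y} ∪
    {a | ∃ x y, x ≠ y ∧ ¬E x y ∧ ¬E y x ∧ a = noe s(x, y)}

variable {E : V → V → Prop}

theorem arr_mem_ofGraph : arr x y ∈ ofGraph E ↔ x ≠ y ∧ E x y := by
  simp [ofGraph]

theorem noe_mem_ofGraph : noe s(x, y) ∈ ofGraph E ↔ x ≠ y ∧ ¬E x y ∧ ¬E y x := by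
  simp only [ofGraph, Set.mem_union, Set.mem_ofPred_eq, reduceCtorEq, noe.injEq, Sym2.eq_iff,
    and_false, exists_false, false_or]
  refine ⟨?_, fun h => ⟨x, y, h.1, h.2.1, h.2.2, .inl ⟨rfl, rfl⟩⟩⟩
  rintro ⟨u, v, huv, h, h', ⟨rfl, rfl⟩ | ⟨rfl, rfl⟩⟩
  exacts [⟨huv, h, h'⟩, ⟨huv.symm, h', h⟩]

theorem graphOf_ofGraph (hE : ∀ x, ¬E x x) : graphOf (ofGraph E) = E := by
  ext x y
  rw [graphOf, arr_mem_ofGraph]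
  exact ⟨And.right, fun h => ⟨fun hxy => hE x (hxy ▸ h), h⟩⟩

theorem stable_ofGraph (hE : ∀ x, ¬Relation.TransGen E x x) : Stable (ofGraph E) := by
  have hirr : ∀ x, ¬E x x := fun x h => hE x (.single h)
  refine ⟨conflictFree_iff.mpr ⟨?_, ?_⟩, ?_⟩
  · rintro a (⟨x, y, hxy, -, rfl⟩ | ⟨x, y, hxy, -, -, rfl⟩)
    exacts [arr_mem_asms.mpr hxy, noe_mem_asms.mpr hxy]
  · rintro a (⟨x, y, -, hxy, rfl⟩ | ⟨x, y, -, hxy, hyx, rfl⟩)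
    · rw [attacks_arr_iff, arr_mem_ofGraph, noe_mem_ofGraph, graphOf_ofGraph hirr]
      rintro (⟨-, ⟨-, hyx⟩ | ⟨-, hnxy, -⟩⟩ | ⟨l, hl, -⟩)
      · exact hE x (.head hxy (.single hyx))
      · exact hnxy hxy
      · obtain ⟨z, hz⟩ := exists_isClosedWalk_iff.mp ⟨l, hl⟩
        exact hE z hz
    · rw [attacks_noe_iff, arr_mem_ofGraph, arr_mem_ofGraph]
      tauto
  · rintro a ⟨x, y, hxy, rfl | rfl⟩ ha
    · rw [arr_mem_ofGraph] at ha
      rw [attacks_arr_iff, arr_mem_ofGraph, noe_mem_ofGraph]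
      by_cases E y x <;> tauto
    · rw [noe_mem_ofGraph] at ha
      rw [attacks_noe_iff, arr_mem_ofGraph, arr_mem_ofGraph]
      tauto

end DagAsm

/-- the map `S ↦ G(S)` sending a stable (= preferred) extension of
`D_dag` to the digraph of its arrow assumptions is a bijection between the
stable extensions of `D_dag` and the directed acyclic graphs on `V`. -/
theorem stable_extensions_biject_dags {V : Type} :
    Set.BijOn (DagAsm.graphOf (V := V))
      {S : Set (DagAsm V) | DagAsm.Stable S}
      {E : V → V → Prop | ∀ x : V, ¬ Relation.TransGen E x x} :=
  ⟨fun _ hS => hS.acyclic_graphOf, fun _ hS _ hT h => hS.eq_of_graphOf_eq hT h,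
    fun _ hE => ⟨_, DagAsm.stable_ofGraph hE,
      DagAsm.graphOf_ofGraph fun x => hE x ∘ Relation.TransGen.single⟩⟩
end

section
/- In the full causal ABA framework D_ds, for any complete extension S (not necessarily maximal), if (x ⫫ y | Z) ∈ S then x and y are d-separated given Z in G(S); however, the empty set is a complete extension of D_ds, showing the converse fails for complete semantics. -/
/-!
If `x` and `y` were d-connected given `Z` in `G(S)`, take a `Z`-active path and keep only the
edges of `G(S)` between vertices of the path together with the edges leaving descendants of
its colliders. This subgraph is a `Z`-active collider tree on the same path, so its arrows,
all of which lie in `S`, attack `(x ⫫ y | Z) ∈ S`, contradicting conflict-freeness.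

Every assumption of `D_ds` is attacked by some set of assumptions (an arrow by the reverse
arrow, a no-edge assumption by the arrow, an independence assumption by the single arrow
`x → y`, a one-edge collider tree), while `∅` attacks nothing. Hence `∅` defends no nonempty
set and is complete, although its empty graph d-separates every pair.
-/

/-- An x-y-path in the digraph `E`: a sequence of distinct vertices from `x` to
`y` whose consecutive members are adjacent (in either direction). -/
def IsPath {V : Type} (E : V → V → Prop) (x y : V) (l : List V) : Prop :=
  l.Nodup ∧ l.head? = some x ∧ l.getLast? = some y ∧
    l.Chain' (fun a b => E a b ∨ E b a)

/-- `l` is `Z`-active in `E`: every interior vertex that is a collider lies in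
`Z` or has a descendant in `Z`, and every interior non-collider lies outside `Z`. -/
def ZActive {V : Type} (E : V → V → Prop) (Z : Set V) (l : List V) : Prop :=
  ∀ u v w : V, [u, v, w] <:+: l →
    ((E u v ∧ E w v) → (v ∈ Z ∨ ∃ z ∈ Z, Relation.TransGen E v z)) ∧
    (¬ (E u v ∧ E w v) → v ∉ Z)

/-- `x` and `y` are d-connected given `Z` iff a `Z`-active x-y-path exists. -/
def DConnected {V : Type} (E : V → V → Prop) (Z : Set V) (x y : V) : Prop :=
  ∃ l : List V, IsPath E x y l ∧ ZActive E Z l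

/-- d-separation: the negation of d-connection. -/
def DSeparated {V : Type} (E : V → V → Prop) (Z : Set V) (x y : V) : Prop :=
  ¬ DConnected E Z x y

/-- `v` is a collider on the path `l` (w.r.t. the edge relation `F`). -/
def ColliderOn {V : Type} (F : V → V → Prop) (l : List V) (v : V) : Prop :=
  ∃ u w : V, [u, v, w] <:+: l ∧ F u v ∧ F w v

/-- An x-y-collider-tree with underlying path `p`: `p` is a path of the graph
`F` and every vertex of `F` not on `p` is a descendant (within `F`) of some
collider of `p`. -/
def IsColliderTree {V : Type} (F : V → V → Prop) (x y : V) (p : List V) : Prop :=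
  IsPath F x y p ∧
    ∀ v : V, (∃ u : V, F u v ∨ F v u) → v ∉ p →
      ∃ c : V, ColliderOn F p c ∧ Relation.TransGen F c v

/-- Assumptions of the full causal ABA framework `D_ds`: arrows, no-edge
assumptions, and conditional independence assumptions `(x ⫫ y | Z)`. -/
inductive CAsm (V : Type) : Type
  | arr : V → V → CAsm V
  | noe : Sym2 V → CAsm V
  | ind : V → V → Set V → CAsm V

namespace CAsm

/-- The assumption set of `D_ds`. -/
def Asms (V : Type) : Set (CAsm V) :=
  {a | (∃ x y : V, x ≠ y ∧ (a = arr x y ∨ a = noe s(x, y))) ∨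
       (∃ (x y : V) (Z : Set V), x ≠ y ∧ x ∉ Z ∧ y ∉ Z ∧ a = ind x y Z)}

/-- The attack relation induced by the rules of `D_ds`: the rules of `D_dag`
(mutual exclusion and cycle rules) together with, for each `Z`-active
x-y-collider-tree, an attack from its set of arrow assumptions on `(x ⫫ y | Z)`. -/
inductive Att (V : Type) : Set (CAsm V) → CAsm V → Prop
  | arrArr (x y : V) : x ≠ y → Att V {arr y x} (arr x y)
  | noeArr (x y : V) : x ≠ y → Att V {noe s(x, y)} (arr x y)
  | arrNoe (x y : V) : x ≠ y → Att V {arr x y} (noe s(x, y))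
  | cycle (l : List V) (x y : V) : 2 ≤ l.length → l.head? = l.getLast? →
      (x, y) ∈ l.zip l.tail →
      Att V {a | ∃ p ∈ l.zip l.tail, a = arr p.1 p.2} (arr x y)
  | tree (F : V → V → Prop) (p : List V) (x y : V) (Z : Set V) :
      x ≠ y → IsColliderTree F x y p → ZActive F Z p →
      Att V {a | ∃ u v : V, F u v ∧ a = arr u v} (ind x y Z)

def Attacks {V : Type} (S T : Set (CAsm V)) : Prop :=
  ∃ U ⊆ S, ∃ a ∈ T, Att V U a

def ConflictFree {V : Type} (S : Set (CAsm V)) : Prop :=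
  S ⊆ Asms V ∧ ¬ Attacks S S

def Defends {V : Type} (S T : Set (CAsm V)) : Prop :=
  ∀ U ⊆ Asms V, Attacks U T → Attacks S U

def Admissible {V : Type} (S : Set (CAsm V)) : Prop :=
  ConflictFree S ∧ Defends S S

/-- Complete: admissible and containing every assumption set it defends. -/
def Complete {V : Type} (S : Set (CAsm V)) : Prop :=
  Admissible S ∧ ∀ T ⊆ Asms V, Defends S T → T ⊆ S

/-- Stable: conflict-free and attacking every assumption outside itself. -/
def Stable {V : Type} (S : Set (CAsm V)) : Prop :=
  ConflictFree S ∧ ∀ a ∈ Asms V, a ∉ S → Attacks S {a}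

/-- The digraph `G(S)` induced by the arrow assumptions in `S`. -/
def graphOf {V : Type} (S : Set (CAsm V)) : V → V → Prop :=
  fun x y => arr x y ∈ S

end CAsm

variable {V : Type}

theorem Relation.TransGen.restrict_reachable {E : V → V → Prop} {c v : V}
    (h : Relation.TransGen E c v) :
    Relation.TransGen (fun a b => E a b ∧ Relation.ReflTransGen E c a) c v := by
  induction h with
  | single hcb => exact .single ⟨hcb, .refl⟩
  | tail hca hab ih => exact ih.tail ⟨hab, hca.to_reflTransGen⟩

theorem IsPath.exists_edge {E : V → V → Prop} {x y : V} {l : List V} (h : IsPath E x y l)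
    (hxy : x ≠ y) : ∃ u v, E u v := by
  obtain ⟨-, hx, hy, hchain⟩ := h
  match l, hx, hy, hchain with
  | [a], hx, hy, _ => simp_all
  | a :: b :: _, _, _, hchain =>
    rcases (List.isChain_cons_cons.mp hchain).1 with hab | hba
    exacts [⟨a, b, hab⟩, ⟨b, a, hba⟩]

theorem ColliderOn.mem {F : V → V → Prop} {l : List V} {c : V} (h : ColliderOn F l c) :
    c ∈ l := by
  obtain ⟨u, w, hinf, -, -⟩ := h
  exact hinf.subset (by simp)

theorem zActive_pair (E : V → V → Prop) (Z : Set V) (x y : V) : ZActive E Z [x, y] := by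
  intro u v w hinf
  simpa using hinf.length_le

theorem isColliderTree_edge {x y : V} (hxy : x ≠ y) :
    IsColliderTree (fun u v => u = x ∧ v = y) x y [x, y] := by
  refine ⟨⟨by simp [hxy], rfl, rfl, List.isChain_pair.mpr (.inl ⟨rfl, rfl⟩)⟩, ?_⟩
  rintro v ⟨u, ⟨-, rfl⟩ | ⟨rfl, -⟩⟩ hv <;> simp at hv

def colliderSubgraph (E : V → V → Prop) (l : List V) (u v : V) : Prop :=
  E u v ∧ ((u ∈ l ∧ v ∈ l) ∨ ∃ c, ColliderOn E l c ∧ Relation.ReflTransGen E c u)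

section colliderSubgraph

variable {E : V → V → Prop} {l : List V}

theorem colliderSubgraph_le : colliderSubgraph E l ≤ E := fun _ _ h => h.1

theorem colliderSubgraph_of_mem {u v : V} (hu : u ∈ l) (hv : v ∈ l) (h : E u v) :
    colliderSubgraph E l u v :=
  ⟨h, .inl ⟨hu, hv⟩⟩

theorem ColliderOn.to_colliderSubgraph {c : V} (hc : ColliderOn E l c) :
    ColliderOn (colliderSubgraph E l) l c := by
  obtain ⟨u, w, hinf, hu, hw⟩ := hc
  have hmem : ∀ a ∈ [u, c, w], a ∈ l := fun _ ha => hinf.subset ha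
  exact ⟨u, w, hinf, colliderSubgraph_of_mem (hmem u (by simp)) (hmem c (by simp)) hu,
    colliderSubgraph_of_mem (hmem w (by simp)) (hmem c (by simp)) hw⟩

theorem ColliderOn.transGen_colliderSubgraph {c v : V} (hc : ColliderOn E l c)
    (h : Relation.TransGen E c v) : Relation.TransGen (colliderSubgraph E l) c v :=
  Relation.TransGen.mono (fun _ _ ⟨hab, hca⟩ => ⟨hab, .inr ⟨c, hc, hca⟩⟩) _ _
    h.restrict_reachable

theorem IsPath.isColliderTree_colliderSubgraph {x y : V} (h : IsPath E x y l) :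
    IsColliderTree (colliderSubgraph E l) x y l := by
  obtain ⟨hnd, hx, hy, hchain⟩ := h
  refine ⟨⟨hnd, hx, hy, hchain.imp_of_mem_imp fun a b ha hb hab => ?_⟩, ?_⟩
  · exact hab.imp (colliderSubgraph_of_mem ha hb) (colliderSubgraph_of_mem hb ha)
  rintro v ⟨u, ⟨huv, ⟨-, hv⟩ | ⟨c, hc, hcu⟩⟩ | ⟨hvu, ⟨hv, -⟩ | ⟨c, hc, hcv⟩⟩⟩ hvl
  · exact absurd hv hvl
  · exact ⟨c, hc.to_colliderSubgraph, hc.transGen_colliderSubgraph (.tail' hcu huv)⟩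
  · exact absurd hv hvl
  · obtain rfl | hcv := Relation.reflTransGen_iff_eq_or_transGen.mp hcv
    · exact absurd hc.mem hvl
    · exact ⟨c, hc.to_colliderSubgraph, hc.transGen_colliderSubgraph hcv⟩

theorem ZActive.to_colliderSubgraph {Z : Set V} (h : ZActive E Z l) :
    ZActive (colliderSubgraph E l) Z l := by
  intro u v w hinf
  have hmem : ∀ a ∈ [u, v, w], a ∈ l := fun _ ha => hinf.subset ha
  refine ⟨fun ⟨huv, hwv⟩ => ?_, fun hnc => (h u v w hinf).2 fun ⟨huv, hwv⟩ => hnc ?_⟩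
  · have hc : ColliderOn E l v := ⟨u, w, hinf, huv.1, hwv.1⟩
    exact ((h u v w hinf).1 ⟨huv.1, hwv.1⟩).imp_right
      fun ⟨z, hz, hvz⟩ => ⟨z, hz, hc.transGen_colliderSubgraph hvz⟩
  · exact ⟨colliderSubgraph_of_mem (hmem u (by simp)) (hmem v (by simp)) huv,
      colliderSubgraph_of_mem (hmem w (by simp)) (hmem v (by simp)) hwv⟩

end colliderSubgraph

theorem DConnected.exists_colliderTree {E : V → V → Prop} {Z : Set V} {x y : V}
    (h : DConnected E Z x y) :
    ∃ F ≤ E, ∃ p, IsColliderTree F x y p ∧ ZActive F Z p := by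
  obtain ⟨l, hpath, hactive⟩ := h
  exact ⟨_, colliderSubgraph_le, l, hpath.isColliderTree_colliderSubgraph,
    hactive.to_colliderSubgraph⟩

namespace CAsm

theorem arr_mem_asms {x y : V} (hxy : x ≠ y) : arr x y ∈ Asms V :=
  .inl ⟨x, y, hxy, .inl rfl⟩

theorem ne_of_ind_mem_asms {x y : V} {Z : Set V} (h : ind x y Z ∈ Asms V) : x ≠ y := by
  rcases h with ⟨_, _, _, h | h⟩ | ⟨_, _, _, hne, -, -, h⟩
  · cases h
  · cases h
  · cases h; exact hne

theorem Att.nonempty {U : Set (CAsm V)} {a : CAsm V} (h : Att V U a) : U.Nonempty := by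
  cases h with
  | arrArr | noeArr | arrNoe => exact Set.singleton_nonempty _
  | cycle l x y _ _ hxy => exact ⟨arr x y, (x, y), hxy, rfl⟩
  | tree F p x y Z hxy htree =>
    obtain ⟨u, v, huv⟩ := htree.1.exists_edge hxy
    exact ⟨arr u v, u, v, huv, rfl⟩

theorem not_attacks_empty (T : Set (CAsm V)) : ¬ Attacks ∅ T := by
  rintro ⟨U, hU, a, -, hatt⟩
  obtain ⟨b, hb⟩ := hatt.nonempty
  exact hU hb

theorem attacks_ind_of_dConnected {S : Set (CAsm V)} {x y : V} {Z : Set V} (hxy : x ≠ y)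
    (h : DConnected (graphOf S) Z x y) : Attacks S {ind x y Z} := by
  obtain ⟨F, hF, p, htree, hactive⟩ := h.exists_colliderTree
  refine ⟨_, ?_, ind x y Z, rfl, Att.tree F p x y Z hxy htree hactive⟩
  rintro _ ⟨u, v, huv, rfl⟩
  exact hF u v huv

theorem ConflictFree.dSeparated_of_ind_mem {S : Set (CAsm V)} (hS : ConflictFree S)
    {x y : V} {Z : Set V} (h : ind x y Z ∈ S) : DSeparated (graphOf S) Z x y := by
  intro hcon
  obtain ⟨U, hU, _, rfl, hatt⟩ := attacks_ind_of_dConnected (ne_of_ind_mem_asms (hS.1 h)) hcon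
  exact hS.2 ⟨U, hU, _, h, hatt⟩

theorem exists_att_of_mem_asms {a : CAsm V} (ha : a ∈ Asms V) :
    ∃ U ⊆ Asms V, Att V U a := by
  rcases ha with ⟨x, y, hxy, rfl | rfl⟩ | ⟨x, y, Z, hxy, -, -, rfl⟩
  · exact ⟨_, Set.singleton_subset_iff.mpr (arr_mem_asms hxy.symm), .arrArr x y hxy⟩
  · exact ⟨_, Set.singleton_subset_iff.mpr (arr_mem_asms hxy), .arrNoe x y hxy⟩
  · refine ⟨_, ?_, .tree _ _ x y Z hxy (isColliderTree_edge hxy) (zActive_pair _ Z x y)⟩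
    rintro _ ⟨u, v, ⟨rfl, rfl⟩, rfl⟩
    exact arr_mem_asms hxy

theorem complete_empty : Complete (∅ : Set (CAsm V)) := by
  refine ⟨⟨⟨Set.empty_subset _, not_attacks_empty _⟩, fun U _ hatt => ?_⟩, fun T hT hdef => ?_⟩
  · obtain ⟨-, -, _, ha, -⟩ := hatt
    exact ha.elim
  · intro a ha
    obtain ⟨U, hU, hatt⟩ := exists_att_of_mem_asms (hT ha)
    exact (not_attacks_empty U (hdef U hU ⟨U, subset_rfl, a, ha, hatt⟩)).elim

theorem dSeparated_graphOf_empty {x y : V} (hxy : x ≠ y) (Z : Set V) :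
    DSeparated (graphOf (∅ : Set (CAsm V))) Z x y := by
  rintro ⟨l, hpath, -⟩
  obtain ⟨u, v, huv⟩ := hpath.exists_edge hxy
  exact huv

end CAsm

theorem complete_ind_implies_dsep_but_not_conversely_general {V : Type} :
    (∀ S : Set (CAsm V), CAsm.Complete S → ∀ (x y : V) (Z : Set V),
      CAsm.ind x y Z ∈ S → DSeparated (CAsm.graphOf S) Z x y) ∧
    CAsm.Complete (∅ : Set (CAsm V)) ∧
    (∀ x y : V, x ≠ y →
      DSeparated (CAsm.graphOf (∅ : Set (CAsm V))) (∅ : Set V) x y ∧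
        CAsm.ind x y ∅ ∉ (∅ : Set (CAsm V))) :=
  ⟨fun _ hS _ _ _ h => hS.1.1.dSeparated_of_ind_mem h, CAsm.complete_empty,
    fun _ _ hxy => ⟨CAsm.dSeparated_graphOf_empty hxy ∅, Set.notMem_empty _⟩⟩

/-- in `D_ds`, for any complete extension `S` (not necessarily
maximal), `(x ⫫ y | Z) ∈ S` implies that `x` and `y` are d-separated given `Z`
in `G(S)`; however, the empty set is a complete extension, and in its
(fully disconnected) graph every pair is d-separated while the empty set contains
no independence assumption — so the converse fails for complete semantics. -/
theorem complete_ind_implies_dsep_but_not_conversely {V : Type} [Nontrivial V] :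
    (∀ S : Set (CAsm V), CAsm.Complete S → ∀ (x y : V) (Z : Set V),
      CAsm.ind x y Z ∈ S → DSeparated (CAsm.graphOf S) Z x y) ∧
    CAsm.Complete (∅ : Set (CAsm V)) ∧
    (∀ x y : V, x ≠ y →
      DSeparated (CAsm.graphOf (∅ : Set (CAsm V))) (∅ : Set V) x y ∧
        CAsm.ind x y ∅ ∉ (∅ : Set (CAsm V))) :=
  complete_ind_implies_dsep_but_not_conversely_general
end
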